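/- Let L_c : ℝ^n → ℝ be an L-smooth differentiable function (‖∇L_c(x) − ∇L_c(y)‖ ≤ L‖x−y‖), and suppose ∇L_c(θ)·∇L_u(θ) = 0. For θ' = θ − η(α∇L_u(θ) + (1−α)∇L_c(θ)), we have L_c(θ') ≤ L_c(θ) − η(1−α)‖∇L_c(θ)‖² + (Lη²/2)‖α∇L_u(θ) + (1−α)∇L_c(θ)‖². -/

import Mathlib

/-!
Apply the descent lemma `f (x + v) ≤ f x + ⟪∇f x, v⟫ + L/2 ‖v‖²` for an `L`-smooth `f` to the step
`v = -η w`, `w = α ∇L_u θ + (1 - α) ∇L_c θ`. Orthogonality of the two gradients makes the linear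
term `-η ⟪∇L_c θ, w⟫` collapse to `-η (1 - α) ‖∇L_c θ‖²`.
-/

open Set

section DescentLemma

variable {E : Type*} [NormedAddCommGroup E] [InnerProductSpace ℝ E] [CompleteSpace E]
  {f : E → ℝ} {L : ℝ}

lemma hasDerivAt_comp_add_smul {x v : E} {t : ℝ} (hf : DifferentiableAt ℝ f (x + t • v)) :
    HasDerivAt (fun s : ℝ => f (x + s • v)) (inner ℝ (gradient f (x + t • v)) v) t := by
  have hline : HasDerivAt (fun s : ℝ => x + s • v) v t := by
    simpa using ((hasDerivAt_id t).smul_const v).const_add x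
  have hcomp := hf.hasGradientAt.hasFDerivAt.comp_hasDerivAt t hline
  rwa [InnerProductSpace.toDual_apply_apply] at hcomp

lemma inner_gradient_add_smul_sub_le
    (hsm : ∀ x y, ‖gradient f x - gradient f y‖ ≤ L * ‖x - y‖) (x v : E) {t : ℝ} (ht : 0 ≤ t) :
    inner ℝ (gradient f (x + t • v)) v - inner ℝ (gradient f x) v ≤ L * ‖v‖ ^ 2 * t := by
  calc inner ℝ (gradient f (x + t • v)) v - inner ℝ (gradient f x) v
      = inner ℝ (gradient f (x + t • v) - gradient f x) v := (inner_sub_left _ _ _).symm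
    _ ≤ ‖gradient f (x + t • v) - gradient f x‖ * ‖v‖ := real_inner_le_norm _ _
    _ ≤ L * ‖x + t • v - x‖ * ‖v‖ := by gcongr; exact hsm _ _
    _ = L * ‖v‖ ^ 2 * t := by
      rw [add_sub_cancel_left, norm_smul, Real.norm_eq_abs, abs_of_nonneg ht]
      ring

theorem descent_lemma (hf : Differentiable ℝ f)
    (hsm : ∀ x y, ‖gradient f x - gradient f y‖ ≤ L * ‖x - y‖) (x v : E) :
    f (x + v) ≤ f x + inner ℝ (gradient f x) v + L / 2 * ‖v‖ ^ 2 := by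
  set A := inner ℝ (gradient f x) v
  -- The Lipschitz bound on the gradient gives `g' ≤ 0` on `[0, 1]`, and `g 1 ≤ g 0` is the claim.
  let g : ℝ → ℝ := fun t => f (x + t • v) - t * A - L * ‖v‖ ^ 2 * t ^ 2 / 2
  have hg : ∀ t, HasDerivAt g (inner ℝ (gradient f (x + t • v)) v - A - L * ‖v‖ ^ 2 * t) t := by
    intro t
    have hquad := ((hasDerivAt_pow 2 t).const_mul (L * ‖v‖ ^ 2)).div_const 2
    refine (((hasDerivAt_comp_add_smul (hf _)).sub ((hasDerivAt_id t).mul_const A)).sub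
      hquad).congr_deriv ?_
    norm_num
    ring
  have hanti : AntitoneOn g (Icc 0 1) := by
    refine antitoneOn_of_deriv_nonpos (convex_Icc 0 1)
      (fun t _ => (hg t).continuousAt.continuousWithinAt)
      (fun t _ => (hg t).differentiableAt.differentiableWithinAt) fun t ht => ?_
    rw [interior_Icc] at ht
    rw [(hg t).deriv]
    linarith [inner_gradient_add_smul_sub_le hsm x v ht.1.le]
  have h01 : g 1 ≤ g 0 := hanti (by simp) (by simp) zero_le_one
  norm_num [g] at h01
  linarith

end DescentLemma

theorem stmt7_general (n : ℕ) (Lc Lu : EuclideanSpace ℝ (Fin n) → ℝ) (L : ℝ)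
    (hLc : Differentiable ℝ Lc)
    (hsmooth : ∀ x y, ‖gradient Lc x - gradient Lc y‖ ≤ L * ‖x - y‖)
    (α η : ℝ)
    (θ θ' : EuclideanSpace ℝ (Fin n))
    (horth : (inner ℝ (gradient Lc θ) (gradient Lu θ) : ℝ) = 0)
    (hstep : θ' = θ - η • (α • gradient Lu θ + (1 - α) • gradient Lc θ)) :
    Lc θ' ≤ Lc θ - η * (1 - α) * ‖gradient Lc θ‖ ^ 2
      + (L * η ^ 2 / 2) * ‖α • gradient Lu θ + (1 - α) • gradient Lc θ‖ ^ 2 := by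
  set w := α • gradient Lu θ + (1 - α) • gradient Lc θ
  have hinner : inner ℝ (gradient Lc θ) w = (1 - α) * ‖gradient Lc θ‖ ^ 2 := by
    rw [inner_add_right, real_inner_smul_right, real_inner_smul_right, horth,
      real_inner_self_eq_norm_sq]
    ring
  have hθ' : θ' = θ + -(η • w) := by rw [hstep, sub_eq_add_neg]
  calc Lc θ' ≤ Lc θ + inner ℝ (gradient Lc θ) (-(η • w)) + L / 2 * ‖-(η • w)‖ ^ 2 :=
        hθ' ▸ descent_lemma hLc hsmooth θ _
    _ = Lc θ - η * (1 - α) * ‖gradient Lc θ‖ ^ 2 + L * η ^ 2 / 2 * ‖w‖ ^ 2 := by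
      rw [inner_neg_right, real_inner_smul_right, hinner, norm_neg, norm_smul, mul_pow,
        Real.norm_eq_abs, sq_abs]
      ring

theorem stmt7 (n : ℕ) (Lc Lu : EuclideanSpace ℝ (Fin n) → ℝ) (L : ℝ)
    (hLc : Differentiable ℝ Lc) (hLu : Differentiable ℝ Lu)
    (hsmooth : ∀ x y, ‖gradient Lc x - gradient Lc y‖ ≤ L * ‖x - y‖)
    (α η : ℝ) (hα : α ∈ Set.Icc (0:ℝ) 1) (hη : 0 < η)
    (θ θ' : EuclideanSpace ℝ (Fin n))
    (horth : (inner ℝ (gradient Lc θ) (gradient Lu θ) : ℝ) = 0)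
    (hstep : θ' = θ - η • (α • gradient Lu θ + (1 - α) • gradient Lc θ)) :
    Lc θ' ≤ Lc θ - η * (1 - α) * ‖gradient Lc θ‖ ^ 2
      + (L * η ^ 2 / 2) * ‖α • gradient Lu θ + (1 - α) • gradient Lc θ‖ ^ 2 :=
  stmt7_general n Lc Lu L hLc hsmooth α η θ θ' horth hstep
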